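/- Let (X,d) be a b-metric space with constant s ≥ 1 and (x_n) a sequence in X. Suppose there exist γ > log₂ s and a sequence (a_n) of positive reals such that the series Σ_{n≥1} a_n · d(x_n, x_{n+1}) converges and liminf_{n→∞} a_n / n^γ > 0. Then (x_n) is Cauchy. -/

import Mathlib

/-!
Write `p = log₂ s` and `D k = d (x k) (x (k + 1))`. Halving a path of length `L ≤ 2 ^ t` recursively
gives `d (x M) (x (M + L)) ≤ s ^ t * ∑ D k ≤ (2 L) ^ p * ∑ D k`. Pick `R` with `log_R s ≤ γ - p` and
chain `x m` to `x n` through the points `m R ^ j`: the `j`-th link costs a factor `s ^ (j + 1)`, and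
for every `k` in the block `[m R ^ j, m R ^ (j + 1))` we have `s ^ j ≤ k ^ (γ - p)` and block length
at most `R k`, so `d (x m) (x n) ≤ K * ∑_{m ≤ k < n} k ^ γ * D k`. As `a k ≥ c k ^ γ` eventually,
the right-hand side is dominated by a tail of the convergent series `∑ a k * D k`.
-/

open Filter Finset Topology

theorem Real.pow_le_rpow_logb {b s y : ℝ} {t : ℕ} (hb : 1 < b) (hs : 1 ≤ s) (hy : b ^ t ≤ y) :
    s ^ t ≤ y ^ Real.logb b s := by
  calc s ^ t = (b ^ Real.logb b s) ^ t := by rw [Real.rpow_logb (by linarith) hb.ne' (by linarith)]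
    _ = (b ^ t) ^ Real.logb b s := Real.rpow_pow_comm (by linarith) _ _
    _ ≤ y ^ Real.logb b s := by
      have : 0 ≤ b ^ t := pow_nonneg (by linarith) t
      gcongr
      exact Real.logb_nonneg hb hs

theorem exists_nat_logb_le (s : ℝ) {δ : ℝ} (hδ : 0 < δ) : ∃ R : ℕ, 1 < R ∧ Real.logb R s ≤ δ := by
  have hlog : Tendsto (fun R : ℕ => Real.logb R s) atTop (𝓝 0) := by
    simp only [Real.logb]
    exact tendsto_const_nhds.div_atTop (Real.tendsto_log_atTop.comp tendsto_natCast_atTop_atTop)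
  exact ((eventually_gt_atTop 1).and (hlog.eventually (ge_mem_nhds hδ))).exists

theorem Finset.sum_range_sum_Ico_of_monotone {M : Type*} [AddCommGroup M] {t : ℕ → ℕ}
    (ht : Monotone t) (f : ℕ → M) (J : ℕ) :
    ∑ j ∈ range J, ∑ k ∈ Ico (t j) (t (j + 1)), f k = ∑ k ∈ Ico (t 0) (t J), f k := by
  simp only [sum_Ico_eq_sub _ (ht (Nat.le_succ _)), sum_Ico_eq_sub _ (ht (Nat.zero_le J))]
  exact sum_range_sub (fun j => ∑ k ∈ range (t j), f k) J

theorem Summable.sum_Ico_le_tsum_sub_sum_range {f : ℕ → ℝ} (hf : Summable f) (hf0 : ∀ k, 0 ≤ f k)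
    {m n : ℕ} (hmn : m ≤ n) : ∑ k ∈ Ico m n, f k ≤ ∑' k, f k - ∑ k ∈ range m, f k := by
  rw [sum_Ico_eq_sub _ hmn]
  gcongr
  exact hf.sum_le_tsum _ fun k _ => hf0 k

theorem exists_pos_eventually_mul_rpow_lt {a : ℕ → ℝ} {γ : ℝ} (ha : ∀ n, 0 ≤ a n)
    (h : 0 < atTop.liminf (fun n : ℕ => a n / (n : ℝ) ^ γ)) :
    ∃ c > 0, ∀ᶠ n : ℕ in atTop, c * (n : ℝ) ^ γ < a n := by
  obtain ⟨c, hc, hc_lt⟩ := exists_between h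
  have hbdd : IsBoundedUnder (· ≥ ·) atTop (fun n : ℕ => a n / (n : ℝ) ^ γ) :=
    isBoundedUnder_of ⟨0, fun n => div_nonneg (ha n) (Real.rpow_nonneg n.cast_nonneg γ)⟩
  refine ⟨c, hc, ?_⟩
  filter_upwards [eventually_lt_of_lt_liminf hc_lt hbdd, eventually_gt_atTop 0] with n hn hn0
  rwa [lt_div_iff₀ (by positivity)] at hn

section BMetric

variable {X : Type*} {d : X → X → ℝ} {s : ℝ}

theorem bdist_le_sum_pow_mul (hs : 0 ≤ s) (hd_self : ∀ x, d x x = 0)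
    (hd_tri : ∀ x y z, d x y ≤ s * (d x z + d z y)) (J : ℕ) (u : ℕ → X) :
    d (u 0) (u J) ≤ ∑ j ∈ range J, s ^ (j + 1) * d (u j) (u (j + 1)) := by
  induction J generalizing u with
  | zero => simp [hd_self]
  | succ J ih =>
    calc d (u 0) (u (J + 1)) ≤ s * (d (u 0) (u 1) + d (u 1) (u (J + 1))) := hd_tri _ _ _
      _ ≤ s * (d (u 0) (u 1) + ∑ j ∈ range J, s ^ (j + 1) * d (u (j + 1)) (u (j + 1 + 1))) := by
        gcongr
        exact ih (fun j => u (j + 1))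
      _ = ∑ j ∈ range (J + 1), s ^ (j + 1) * d (u j) (u (j + 1)) := by
        rw [sum_range_succ', mul_add, mul_sum, add_comm]
        congr 1
        · exact sum_congr rfl fun j _ => by ring
        · ring

theorem bdist_le_pow_mul_sum_of_le_two_pow (hs : 1 ≤ s) (hd_nonneg : ∀ x y, 0 ≤ d x y)
    (hd_self : ∀ x, d x x = 0) (hd_tri : ∀ x y z, d x y ≤ s * (d x z + d z y))
    (t : ℕ) (u : ℕ → X) {L : ℕ} (hL : L ≤ 2 ^ t) :
    d (u 0) (u L) ≤ s ^ t * ∑ k ∈ range L, d (u k) (u (k + 1)) := by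
  induction t generalizing u L with
  | zero =>
    interval_cases L <;> simp [hd_self]
  | succ t ih =>
    have hsum : 0 ≤ ∑ k ∈ range L, d (u k) (u (k + 1)) := sum_nonneg fun k _ => hd_nonneg _ _
    by_cases hLt : L ≤ 2 ^ t
    · calc d (u 0) (u L) ≤ s ^ t * ∑ k ∈ range L, d (u k) (u (k + 1)) := ih u hLt
        _ ≤ s ^ (t + 1) * ∑ k ∈ range L, d (u k) (u (k + 1)) :=
          mul_le_mul_of_nonneg_right (pow_le_pow_right₀ hs t.le_succ) hsum
    obtain ⟨L', rfl⟩ := Nat.exists_eq_add_of_le (not_le.1 hLt).le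
    have hL' : L' ≤ 2 ^ t := by rw [pow_succ] at hL; omega
    calc d (u 0) (u (2 ^ t + L')) ≤ s * (d (u 0) (u (2 ^ t)) + d (u (2 ^ t)) (u (2 ^ t + L'))) :=
          hd_tri _ _ _
      _ ≤ s * (s ^ t * ∑ k ∈ range (2 ^ t), d (u k) (u (k + 1))
            + s ^ t * ∑ k ∈ range L', d (u (2 ^ t + k)) (u (2 ^ t + (k + 1)))) := by
        gcongr
        · exact ih u le_rfl
        · exact ih (fun k => u (2 ^ t + k)) hL'
      _ = s ^ (t + 1) * ∑ k ∈ range (2 ^ t + L'), d (u k) (u (k + 1)) := by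
        rw [sum_range_add, pow_succ]
        simp only [add_assoc]
        ring

theorem bdist_le_rpow_mul_sum (hs : 1 ≤ s) (hd_nonneg : ∀ x y, 0 ≤ d x y)
    (hd_self : ∀ x, d x x = 0) (hd_tri : ∀ x y z, d x y ≤ s * (d x z + d z y))
    (u : ℕ → X) (L : ℕ) :
    d (u 0) (u L) ≤ (2 * L : ℝ) ^ Real.logb 2 s * ∑ k ∈ range L, d (u k) (u (k + 1)) := by
  rcases Nat.eq_zero_or_pos L with rfl | hL
  · simp [hd_self]
  set t := Nat.log 2 L + 1
  have hLt : L ≤ 2 ^ t := (Nat.lt_pow_succ_log_self one_lt_two L).le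
  have htL : (2 : ℝ) ^ t ≤ 2 * L := by
    have := Nat.pow_log_le_self 2 hL.ne'
    rw [pow_succ']
    exact_mod_cast Nat.mul_le_mul_left 2 this
  calc d (u 0) (u L) ≤ s ^ t * ∑ k ∈ range L, d (u k) (u (k + 1)) :=
        bdist_le_pow_mul_sum_of_le_two_pow hs hd_nonneg hd_self hd_tri t u hLt
    _ ≤ _ := by
      gcongr
      · exact sum_nonneg fun k _ => hd_nonneg _ _
      · exact Real.pow_le_rpow_logb one_lt_two hs htL

theorem bdist_le_mul_sum_rpow_mul_of_block (hs : 1 ≤ s) (hd_nonneg : ∀ x y, 0 ≤ d x y)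
    (hd_self : ∀ x, d x x = 0) (hd_tri : ∀ x y z, d x y ≤ s * (d x z + d z y))
    {R : ℕ} (hR : 1 < R) {γ : ℝ} (hγ : Real.logb 2 s + Real.logb R s ≤ γ) (x : ℕ → X)
    {j M M' : ℕ} (hM : R ^ j ≤ M) (hMM' : M ≤ M') (hM' : M' ≤ R * M) :
    s ^ (j + 1) * d (x M) (x M') ≤
      s * (2 * R : ℝ) ^ Real.logb 2 s * ∑ k ∈ Ico M M', (k : ℝ) ^ γ * d (x k) (x (k + 1)) := by
  set p := Real.logb 2 s
  obtain ⟨L, rfl⟩ := Nat.exists_eq_add_of_le hMM'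
  have hpath : d (x M) (x (M + L)) ≤
      (2 * L : ℝ) ^ p * ∑ k ∈ range L, d (x (M + k)) (x (M + k + 1)) :=
    bdist_le_rpow_mul_sum hs hd_nonneg hd_self hd_tri (fun i => x (M + i)) L
  have hweight : ∀ k ∈ range L,
      s ^ (j + 1) * (2 * L : ℝ) ^ p ≤ s * (2 * R : ℝ) ^ p * ((M + k : ℕ) : ℝ) ^ γ := by
    intro k _
    have hRk : (R : ℝ) ^ j ≤ (M + k : ℕ) := by exact_mod_cast hM.trans (Nat.le_add_right M k)
    have hk : (1 : ℝ) ≤ (M + k : ℕ) := le_trans (one_le_pow₀ (by exact_mod_cast hR.le)) hRk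
    have hsj : s ^ j ≤ ((M + k : ℕ) : ℝ) ^ Real.logb R s :=
      Real.pow_le_rpow_logb (by exact_mod_cast hR) hs hRk
    have hLk : (2 * L : ℝ) ≤ 2 * R * (M + k : ℕ) := by
      have : 2 * L ≤ 2 * R * (M + k) := by
        rw [mul_assoc]; exact Nat.mul_le_mul_left 2 (by nlinarith)
      exact_mod_cast this
    have hp : 0 ≤ p := Real.logb_nonneg one_lt_two hs
    calc s ^ (j + 1) * (2 * L : ℝ) ^ p = s * s ^ j * (2 * L : ℝ) ^ p := by ring
      _ ≤ s * ((M + k : ℕ) : ℝ) ^ Real.logb R s * (2 * R * (M + k : ℕ) : ℝ) ^ p := by gcongr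
      _ = s * (2 * R : ℝ) ^ p * ((M + k : ℕ) : ℝ) ^ (p + Real.logb R s) := by
        rw [Real.mul_rpow (by positivity) (by positivity), Real.rpow_add (by positivity)]
        ring
      _ ≤ s * (2 * R : ℝ) ^ p * ((M + k : ℕ) : ℝ) ^ γ :=
        mul_le_mul_of_nonneg_left (Real.rpow_le_rpow_of_exponent_le hk hγ) (by positivity)
  rw [sum_Ico_eq_sum_range, Nat.add_sub_cancel_left, mul_sum]
  calc s ^ (j + 1) * d (x M) (x (M + L))
      ≤ s ^ (j + 1) * ((2 * L : ℝ) ^ p * ∑ k ∈ range L, d (x (M + k)) (x (M + k + 1))) := by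
        gcongr
      _ = ∑ k ∈ range L, s ^ (j + 1) * (2 * L : ℝ) ^ p * d (x (M + k)) (x (M + k + 1)) := by
        rw [mul_sum, mul_sum]; exact sum_congr rfl fun k _ => by ring
      _ ≤ ∑ k ∈ range L,
          s * (2 * R : ℝ) ^ p * ((M + k : ℕ) : ℝ) ^ γ * d (x (M + k)) (x (M + k + 1)) :=
        sum_le_sum fun k hk => mul_le_mul_of_nonneg_right (hweight k hk) (hd_nonneg _ _)
      _ = _ := sum_congr rfl fun k _ => by ring

theorem exists_bdist_le_mul_sum_rpow_mul (hs : 1 ≤ s) (hd_nonneg : ∀ x y, 0 ≤ d x y)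
    (hd_self : ∀ x, d x x = 0) (hd_tri : ∀ x y z, d x y ≤ s * (d x z + d z y))
    {γ : ℝ} (hγ : Real.logb 2 s < γ) (x : ℕ → X) :
    ∃ K, 0 ≤ K ∧ ∀ m n, 1 ≤ m → m ≤ n →
      d (x m) (x n) ≤ K * ∑ k ∈ Ico m n, (k : ℝ) ^ γ * d (x k) (x (k + 1)) := by
  obtain ⟨R, hR, hRγ⟩ := exists_nat_logb_le s (sub_pos.2 hγ)
  set K := s * (2 * R : ℝ) ^ Real.logb 2 s
  refine ⟨K, by positivity, fun m n hm hmn => ?_⟩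
  set f : ℕ → ℝ := fun k => (k : ℝ) ^ γ * d (x k) (x (k + 1))
  set t : ℕ → ℕ := fun j => min (m * R ^ j) n
  have ht : Monotone t := fun i j hij =>
    min_le_min_right n (Nat.mul_le_mul_left m (Nat.pow_le_pow_right (by omega) hij))
  have ht0 : t 0 = m := by simp [t, hmn]
  have htn : t n = n := by
    have : n ≤ m * R ^ n := calc
      n ≤ 2 ^ n := Nat.lt_two_pow_self.le
      _ ≤ R ^ n := Nat.pow_le_pow_left hR n
      _ ≤ m * R ^ n := Nat.le_mul_of_pos_left _ hm
    exact min_eq_right this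
  have hstep : ∀ j, s ^ (j + 1) * d (x (t j)) (x (t (j + 1))) ≤
      K * ∑ k ∈ Ico (t j) (t (j + 1)), f k := by
    intro j
    by_cases hj : m * R ^ j ≤ n
    · have htj : t j = m * R ^ j := min_eq_left hj
      rw [htj]
      refine bdist_le_mul_sum_rpow_mul_of_block hs hd_nonneg hd_self hd_tri hR (by linarith) x
        (Nat.le_mul_of_pos_left _ hm) (htj ▸ ht j.le_succ) ?_
      calc t (j + 1) ≤ m * R ^ (j + 1) := min_le_left _ _
        _ = R * (m * R ^ j) := by ring
    · have htj : t j = n := min_eq_right (not_le.1 hj).le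
      have htj' : t (j + 1) = n := le_antisymm (min_le_right _ _) (htj ▸ ht j.le_succ)
      simp [htj, htj', hd_self]
  calc d (x m) (x n) = d (x (t 0)) (x (t n)) := by rw [ht0, htn]
    _ ≤ ∑ j ∈ range n, s ^ (j + 1) * d (x (t j)) (x (t (j + 1))) :=
      bdist_le_sum_pow_mul (by linarith) hd_self hd_tri n (x ∘ t)
    _ ≤ ∑ j ∈ range n, K * ∑ k ∈ Ico (t j) (t (j + 1)), f k := sum_le_sum fun j _ => hstep j
    _ = K * ∑ k ∈ Ico m n, f k := by
      rw [← mul_sum, sum_range_sum_Ico_of_monotone ht, ht0, htn]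

theorem forall_dist_lt_of_le_of_tendsto (hd_symm : ∀ x y, d x y = d y x)
    {x : ℕ → X} {g : ℕ → ℝ} (hg : Tendsto g atTop (𝓝 0))
    (hbound : ∀ᶠ m in atTop, ∀ n ≥ m, d (x m) (x n) ≤ g m) :
    ∀ ε > 0, ∃ N : ℕ, ∀ m ≥ N, ∀ n ≥ N, d (x m) (x n) < ε := by
  intro ε hε
  obtain ⟨N, hN⟩ := eventually_atTop.1 (hbound.and (hg.eventually (gt_mem_nhds hε)))
  refine ⟨N, fun m hm n hn => ?_⟩
  rcases le_total m n with hmn | hnm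
  · exact ((hN m hm).1 n hmn).trans_lt (hN m hm).2
  · rw [hd_symm]
    exact ((hN n hn).1 m hnm).trans_lt (hN n hn).2

end BMetric

theorem bmetric_cauchy_of_summable_weights
    (X : Type*) (d : X → X → ℝ) (s : ℝ) (hs : 1 ≤ s)
    (hd_nonneg : ∀ x y, 0 ≤ d x y)
    (hd_eq : ∀ x y, d x y = 0 ↔ x = y)
    (hd_symm : ∀ x y, d x y = d y x)
    (hd_tri : ∀ x y z, d x y ≤ s * (d x z + d z y))
    (x : ℕ → X) (γ : ℝ) (hγ : Real.logb 2 s < γ)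
    (a : ℕ → ℝ) (ha : ∀ n, 0 < a n)
    (hsum : Summable (fun n : ℕ => a n * d (x n) (x (n + 1))))
    (hliminf : 0 < Filter.atTop.liminf (fun n : ℕ => a n / (n : ℝ) ^ γ)) :
    ∀ ε > 0, ∃ N : ℕ, ∀ m ≥ N, ∀ n ≥ N, d (x m) (x n) < ε := by
  set w : ℕ → ℝ := fun n => a n * d (x n) (x (n + 1))
  have hw : ∀ n, 0 ≤ w n := fun n => mul_nonneg (ha n).le (hd_nonneg _ _)
  obtain ⟨K, hK, hbound⟩ := exists_bdist_le_mul_sum_rpow_mul hs hd_nonneg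
    (fun x => (hd_eq x x).2 rfl) hd_tri hγ x
  obtain ⟨c, hc, hca⟩ := exists_pos_eventually_mul_rpow_lt (fun n => (ha n).le) hliminf
  obtain ⟨N, hN⟩ := eventually_atTop.1 hca
  have htail : Tendsto (fun m => K / c * (∑' n, w n - ∑ n ∈ range m, w n)) atTop (𝓝 0) := by
    simpa using ((tendsto_const_nhds (x := ∑' n, w n)).sub
      hsum.hasSum.tendsto_sum_nat).const_mul (K / c)
  refine forall_dist_lt_of_le_of_tendsto hd_symm htail ?_
  filter_upwards [eventually_ge_atTop (max N 1)] with m hm n hmn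
  have hweight : ∀ k ∈ Ico m n, (k : ℝ) ^ γ * d (x k) (x (k + 1)) ≤ w k / c := fun k hk => by
    rw [le_div_iff₀ hc]
    calc (k : ℝ) ^ γ * d (x k) (x (k + 1)) * c = c * (k : ℝ) ^ γ * d (x k) (x (k + 1)) := by
          ring
      _ ≤ w k := by
        have hNk : N ≤ k := by have := (mem_Ico.1 hk).1; omega
        exact mul_le_mul_of_nonneg_right (hN k hNk).le (hd_nonneg _ _)
  calc d (x m) (x n) ≤ K * ∑ k ∈ Ico m n, (k : ℝ) ^ γ * d (x k) (x (k + 1)) :=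
        hbound m n (by omega) hmn
    _ ≤ K * ∑ k ∈ Ico m n, w k / c := mul_le_mul_of_nonneg_left (sum_le_sum hweight) hK
    _ = K / c * ∑ k ∈ Ico m n, w k := by rw [← sum_div]; ring
    _ ≤ K / c * (∑' n, w n - ∑ n ∈ range m, w n) := by
      gcongr
      exact hsum.sum_Ico_le_tsum_sub_sum_range hw hmn
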